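/- Let (X,d) be a Polish metric space and a,b>0. For all finite nonnegative Borel measures μ₁,μ₂ on X, W₁^{a,b}(μ₁,μ₂) = inf over γ ∈ M^≤(μ₁,μ₂) of { a|μ₁−γ₁| + a|μ₂−γ₂| + b∫_{X×X} d(x,y) dγ(x,y) }, where γ₁,γ₂ are the marginals of γ and M^≤(μ₁,μ₂) = { γ ∈ M(X×X) : ∫_{X×X} d dγ < ∞ and γᵢ ≤ μᵢ for i=1,2 }. -/

import Mathlib

open MeasureTheory ENNReal

section GW

variable {X : Type*} [MeasurableSpace X] [MetricSpace X]

/-- A transference plan between two finite measures `μ` and `ν` of equal mass: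
a Borel probability measure `π` on `X × X` with `|μ| π(A × X) = μ A` and
`|ν| π(X × B) = ν B`. -/
def IsCoupling (μ ν : Measure X) (π : Measure (X × X)) : Prop :=
  IsProbabilityMeasure π ∧
  (∀ A : Set X, MeasurableSet A → μ Set.univ * π (A ×ˢ (Set.univ : Set X)) = μ A) ∧
  (∀ B : Set X, MeasurableSet B → ν Set.univ * π ((Set.univ : Set X) ×ˢ B) = ν B)

/-- The (mass-scaled) `p`-Wasserstein distance
`W_p(μ,ν) = (|μ| ⨅_π ∫ d(x,y)^p dπ)^{1/p}`, as an extended nonnegative real. -/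
noncomputable def WpE (p : ℝ) (μ ν : Measure X) : ℝ≥0∞ :=
  (μ Set.univ * ⨅ π : {π : Measure (X × X) // IsCoupling μ ν π},
      ∫⁻ z, edist z.1 z.2 ^ p ∂(π.1)) ^ (1 / p)

/-- `μ ∈ M_p(X)`: `μ` is a finite (nonnegative Borel) measure with finite `p`-moment. -/
def MemMp (p : ℝ) (μ : Measure X) : Prop :=
  IsFiniteMeasure μ ∧ ∀ x₀ : X, ∫⁻ x, edist x x₀ ^ p ∂μ ≠ ∞

/-- Total variation mass `|μ - ν|` of the difference of two (finite) measures,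
as an extended nonnegative real. -/
noncomputable def tvE (μ ν : Measure X) : ℝ≥0∞ := (μ - ν) Set.univ + (ν - μ) Set.univ

/-- Total variation mass `|μ - ν|` as a real number. -/
noncomputable def tv (μ ν : Measure X) : ℝ := (tvE μ ν).toReal

/-- The generalized Wasserstein distance
`W_p^{a,b}(μ,ν) = inf { a|μ-μ'| + a|ν-ν'| + b W_p(μ',ν') : μ',ν' ∈ M_p(X), |μ'|=|ν'| }`,
as an extended nonnegative real. -/
noncomputable def genWE (a b p : ℝ) (μ ν : Measure X) : ℝ≥0∞ :=
  ⨅ (μ' : Measure X) (ν' : Measure X) (_ : MemMp p μ') (_ : MemMp p ν')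
      (_ : μ' Set.univ = ν' Set.univ),
    ENNReal.ofReal a * tvE μ μ' + ENNReal.ofReal a * tvE ν ν' +
      ENNReal.ofReal b * WpE p μ' ν'

/-- The generalized Wasserstein distance `W_p^{a,b}` as a real number. -/
noncomputable def genW (a b p : ℝ) (μ ν : Measure X) : ℝ := (genWE a b p μ ν).toReal

/-- `I(φ) = inf_{s ≥ 0} (sφ + a|1-s|)`. -/
noncomputable def Idual (a φ : ℝ) : ℝ :=
  sInf {v : ℝ | ∃ s : ℝ, 0 ≤ s ∧ v = s * φ + a * |1 - s|}

end GW

/-!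
For `≤`, a dominated plan `γ` restricted to `{(x, y) | d(x, x₀) ≤ n}` has marginals of finite
first moment, and it is itself (after normalisation) a coupling of its marginals, so `W₁^{a,b}` is
bounded by its objective; the mass lost in the restriction tends to `0` as `n → ∞`.

For `≥`, take `μ', ν'` of mass `m` and a coupling `π`. In the plan `m π`, first keep only a part
with first marginal `μ₁ ⊓ μ'` (a density in `x`), then a part of that with second marginal
`μ₂ ⊓ ν₁`, where `ν₁` is the second marginal after the first step. The lattice meet comes from a
Hahn decomposition and satisfies `|ρ - σ| = (|ρ| - |ρ ⊓ σ|) + (|σ| - |ρ ⊓ σ|)`; together with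
`|μ₂ - ν₁| ≤ |μ₂ - ν'| + (|ν'| - |ν₁|)` this shows that the mass removed in the two steps is at most
`|μ₁ - μ'| + |μ₂ - ν'|`, while the cost only decreases.
-/

namespace MeasureTheory

variable {α β : Type*} {mα : MeasurableSpace α} {mβ : MeasurableSpace β}

lemma Measure.sub_le_sub_add_sub (μ ν ρ : Measure α) [IsFiniteMeasure μ] [IsFiniteMeasure ν]
    [IsFiniteMeasure ρ] : μ - ν ≤ (μ - ρ) + (ρ - ν) :=
  Measure.sub_le_iff_le_add.2 <| calc
    μ ≤ (μ - ρ) + ρ := Measure.sub_le_iff_le_add.1 le_rfl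
    _ ≤ (μ - ρ) + ((ρ - ν) + ν) := add_le_add le_rfl (Measure.sub_le_iff_le_add.1 le_rfl)
    _ = (μ - ρ) + (ρ - ν) + ν := (add_assoc _ _ _).symm

lemma IsHahnDecomposition.measure_univ_eq {μ ν : Measure α} [IsFiniteMeasure ν] {s : Set α}
    (hs : IsHahnDecomposition μ ν s) :
    μ Set.univ = (μ.restrict s + ν.restrict sᶜ) Set.univ + (μ - ν) Set.univ := by
  have hsub : (μ - ν) sᶜ = μ sᶜ - ν sᶜ := by
    rw [← Measure.restrict_apply_univ,
      Measure.restrict_sub_eq_restrict_sub_restrict hs.measurableSet.compl,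
      Measure.sub_apply MeasurableSet.univ hs.ge_on_compl, Measure.restrict_apply_univ,
      Measure.restrict_apply_univ]
  have hle : ν sᶜ ≤ μ sᶜ := by simpa using hs.ge_on_compl Set.univ
  rw [← measure_add_measure_compl (μ := μ - ν) hs.measurableSet,
    Measure.sub_apply_eq_zero_of_isHahnDecomposition hs, zero_add, hsub, Measure.add_apply,
    Measure.restrict_apply_univ, Measure.restrict_apply_univ, add_assoc,
    add_tsub_cancel_of_le hle, measure_add_measure_compl hs.measurableSet]

/-- The witness is `μ ⊓ ν = μ.restrict s + ν.restrict sᶜ` for a Hahn set `s` of `(μ, ν)`. -/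
lemma Measure.exists_le_le_measure_univ_eq (μ ν : Measure α) [IsFiniteMeasure μ]
    [IsFiniteMeasure ν] :
    ∃ w ≤ μ, w ≤ ν ∧ μ Set.univ = w Set.univ + (μ - ν) Set.univ ∧
      ν Set.univ = w Set.univ + (ν - μ) Set.univ := by
  obtain ⟨s, hs⟩ := exists_isHahnDecomposition μ ν
  refine ⟨μ.restrict s + ν.restrict sᶜ, ?_, ?_, hs.measure_univ_eq, ?_⟩
  · calc μ.restrict s + ν.restrict sᶜ ≤ μ.restrict s + μ.restrict sᶜ :=
          add_le_add le_rfl hs.ge_on_compl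
      _ = μ := Measure.restrict_add_restrict_compl hs.measurableSet
  · calc μ.restrict s + ν.restrict sᶜ ≤ ν.restrict s + ν.restrict sᶜ :=
          add_le_add hs.le_on le_rfl
      _ = ν := Measure.restrict_add_restrict_compl hs.measurableSet
  · simpa [add_comm] using hs.compl.measure_univ_eq

lemma Measure.exists_le_map_eq (γ : Measure α) [IsFiniteMeasure γ] {f : α → β}
    (hf : Measurable f) {w : Measure β} (hw : w ≤ γ.map f) : ∃ γ' ≤ γ, γ'.map f = w := by
  have : IsFiniteMeasure w := isFiniteMeasure_of_le _ hw
  set g := w.rnDeriv (γ.map f)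
  have hg : Measurable g := Measure.measurable_rnDeriv _ _
  refine ⟨γ.withDensity (g ∘ f), ?_, ?_⟩
  · have hg_le : g ∘ f ≤ᵐ[γ] 1 :=
      ae_of_ae_map hf.aemeasurable (Measure.rnDeriv_le_one_of_le hw)
    simpa using withDensity_mono hg_le
  · ext s hs
    rw [Measure.map_apply hf hs, withDensity_apply _ (hf hs), Function.comp_def,
      ← setLIntegral_map hs hg hf, ← withDensity_apply _ hs,
      Measure.withDensity_rnDeriv_eq _ _ (Measure.absolutelyContinuous_of_le hw)]

end MeasureTheory

section

variable {X : Type*} [MeasurableSpace X]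

lemma tvE_of_le {μ ρ : Measure X} [IsFiniteMeasure μ] (h : ρ ≤ μ) :
    tvE μ ρ = μ Set.univ - ρ Set.univ := by
  have : IsFiniteMeasure ρ := isFiniteMeasure_of_le μ h
  rw [tvE, Measure.sub_eq_zero_of_le h, Measure.sub_apply MeasurableSet.univ h,
    Measure.coe_zero, Pi.zero_apply, add_zero]

lemma tvE_ne_top (μ ν : Measure X) [IsFiniteMeasure μ] [IsFiniteMeasure ν] : tvE μ ν ≠ ∞ :=
  ENNReal.add_ne_top.2 ⟨measure_ne_top _ _, measure_ne_top _ _⟩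

lemma tvE_triangle (μ ν ρ : Measure X) [IsFiniteMeasure μ] [IsFiniteMeasure ν]
    [IsFiniteMeasure ρ] : tvE μ ν ≤ tvE μ ρ + tvE ρ ν := by
  have h₁ := Measure.le_iff'.1 (Measure.sub_le_sub_add_sub μ ν ρ) Set.univ
  have h₂ := Measure.le_iff'.1 (Measure.sub_le_sub_add_sub ν μ ρ) Set.univ
  rw [Measure.add_apply] at h₁ h₂
  calc tvE μ ν ≤ ((μ - ρ) Set.univ + (ρ - ν) Set.univ) + ((ν - ρ) Set.univ + (ρ - μ) Set.univ) :=
        add_le_add h₁ h₂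
    _ = tvE μ ρ + tvE ρ ν := by unfold tvE; ring

lemma exists_le_le_tvE_eq (μ ν : Measure X) [IsFiniteMeasure μ] [IsFiniteMeasure ν] :
    ∃ w ≤ μ, w ≤ ν ∧ tvE μ ν = (μ Set.univ - w Set.univ) + (ν Set.univ - w Set.univ) := by
  obtain ⟨w, hwμ, hwν, hμ, hν⟩ := Measure.exists_le_le_measure_univ_eq μ ν
  have hw : w Set.univ ≠ ∞ := ne_top_of_le_ne_top (measure_ne_top μ _) (hwμ _)
  refine ⟨w, hwμ, hwν, ?_⟩
  rw [tvE, hμ, hν, ENNReal.add_sub_cancel_left hw, ENNReal.add_sub_cancel_left hw]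

lemma exists_le_tvE_fst_add_tvE_snd_le (γ : Measure (X × X)) [IsFiniteMeasure γ]
    (μ₁ μ₂ : Measure X) [IsFiniteMeasure μ₁] [IsFiniteMeasure μ₂] :
    ∃ γ' ≤ γ, γ'.fst ≤ μ₁ ∧ γ'.snd ≤ μ₂ ∧
      tvE μ₁ γ'.fst + tvE μ₂ γ'.snd ≤ tvE μ₁ γ.fst + tvE μ₂ γ.snd := by
  obtain ⟨w₁, hw₁μ, hw₁γ, htv₁⟩ := exists_le_le_tvE_eq μ₁ γ.fst
  obtain ⟨γ₁, hγ₁, hγ₁fst⟩ := γ.exists_le_map_eq measurable_fst hw₁γ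
  have : IsFiniteMeasure γ₁ := isFiniteMeasure_of_le γ hγ₁
  obtain ⟨w₂, hw₂μ, hw₂γ, htv₂⟩ := exists_le_le_tvE_eq μ₂ γ₁.snd
  obtain ⟨γ₂, hγ₂, hγ₂snd⟩ := γ₁.exists_le_map_eq measurable_snd hw₂γ
  have hfst : γ₂.fst ≤ μ₁ := (Measure.fst_mono hγ₂).trans (hγ₁fst.le.trans hw₁μ)
  have hsnd : γ₂.snd ≤ μ₂ := hγ₂snd.le.trans hw₂μ
  refine ⟨γ₂, hγ₂.trans hγ₁, hfst, hsnd, ?_⟩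
  have hw₁ : w₁ Set.univ = γ₁ Set.univ := by rw [← hγ₁fst]; exact Measure.fst_univ
  have hw₂ : w₂ Set.univ = γ₂ Set.univ := by rw [← hγ₂snd]; exact Measure.snd_univ
  have hβα : γ₂ Set.univ ≤ γ₁ Set.univ := hγ₂ Set.univ
  have hαP : γ₁ Set.univ ≤ μ₁ Set.univ := hw₁ ▸ hw₁μ Set.univ
  have hsnd_le : tvE μ₂ γ₁.snd ≤ tvE μ₂ γ.snd + (γ Set.univ - γ₁ Set.univ) := by
    calc tvE μ₂ γ₁.snd ≤ tvE μ₂ γ.snd + tvE γ.snd γ₁.snd := tvE_triangle _ _ _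
      _ = tvE μ₂ γ.snd + (γ Set.univ - γ₁ Set.univ) := by
        rw [tvE_of_le (Measure.snd_mono hγ₁), Measure.snd_univ, Measure.snd_univ]
  rw [htv₂, hw₂, Measure.snd_univ] at hsnd_le
  rw [htv₁, hw₁, Measure.fst_univ, tvE_of_le hfst, tvE_of_le hsnd, Measure.fst_univ,
    Measure.snd_univ, ← tsub_add_tsub_cancel hαP hβα]
  calc μ₁ Set.univ - γ₁ Set.univ + (γ₁ Set.univ - γ₂ Set.univ) + (μ₂ Set.univ - γ₂ Set.univ)
      = μ₁ Set.univ - γ₁ Set.univ + (μ₂ Set.univ - γ₂ Set.univ + (γ₁ Set.univ - γ₂ Set.univ)) := by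
        ring
    _ ≤ μ₁ Set.univ - γ₁ Set.univ + (tvE μ₂ γ.snd + (γ Set.univ - γ₁ Set.univ)) :=
        add_le_add le_rfl hsnd_le
    _ = _ := by ring

lemma IsCoupling.smul_fst {μ ν : Measure X} {π : Measure (X × X)} (hπ : IsCoupling μ ν π) :
    (μ Set.univ • π).fst = μ := by
  ext A hA
  rw [Measure.fst_apply hA, Measure.smul_apply, smul_eq_mul, ← Set.prod_univ, hπ.2.1 A hA]

lemma IsCoupling.smul_snd {μ ν : Measure X} {π : Measure (X × X)} (hπ : IsCoupling μ ν π) :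
    (ν Set.univ • π).snd = ν := by
  ext B hB
  rw [Measure.snd_apply hB, Measure.smul_apply, smul_eq_mul, ← Set.univ_prod, hπ.2.2 B hB]

lemma isCoupling_fst_snd (γ : Measure (X × X)) [IsFiniteMeasure γ] (hγ : γ ≠ 0) :
    IsCoupling γ.fst γ.snd ((γ Set.univ)⁻¹ • γ) := by
  have h₀ : γ Set.univ ≠ 0 := Measure.measure_univ_ne_zero.2 hγ
  have hcancel : ∀ t, γ Set.univ * ((γ Set.univ)⁻¹ * t) = t := fun t => by
    rw [← mul_assoc, ENNReal.mul_inv_cancel h₀ (measure_ne_top _ _), one_mul]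
  refine ⟨⟨?_⟩, fun A hA => ?_, fun B hB => ?_⟩
  · rw [Measure.smul_apply, smul_eq_mul, ENNReal.inv_mul_cancel h₀ (measure_ne_top _ _)]
  · rw [Measure.fst_univ, Measure.smul_apply, smul_eq_mul, hcancel, Measure.fst_apply hA,
      Set.prod_univ]
  · rw [Measure.snd_univ, Measure.smul_apply, smul_eq_mul, hcancel, Measure.snd_apply hB,
      Set.univ_prod]

end

section

variable {X : Type*} [MeasurableSpace X] [MetricSpace X]

noncomputable def planObjective (a b : ℝ) (μ₁ μ₂ : Measure X) (γ : Measure (X × X)) : ℝ≥0∞ :=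
  ENNReal.ofReal a * tvE μ₁ γ.fst + ENNReal.ofReal a * tvE μ₂ γ.snd +
    ENNReal.ofReal b * ∫⁻ z, edist z.1 z.2 ∂γ

/-- The set `M^≤(μ₁, μ₂)`. -/
def dominatedPlans (μ₁ μ₂ : Measure X) : Set (Measure (X × X)) :=
  {γ | IsFiniteMeasure γ ∧ (∫⁻ z, edist z.1 z.2 ∂γ) ≠ ∞ ∧ γ.fst ≤ μ₁ ∧ γ.snd ≤ μ₂}

lemma zero_mem_dominatedPlans (μ₁ μ₂ : Measure X) : 0 ∈ dominatedPlans μ₁ μ₂ :=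
  ⟨inferInstance, by simp, by simp [Measure.zero_le], by simp [Measure.zero_le]⟩

lemma WpE_one_eq (μ ν : Measure X) :
    WpE 1 μ ν = μ Set.univ * ⨅ π : {π : Measure (X × X) // IsCoupling μ ν π},
      ∫⁻ z, edist z.1 z.2 ∂π.1 := by
  simp only [WpE, ENNReal.rpow_one, div_one]

lemma WpE_one_fst_snd_le (γ : Measure (X × X)) [IsFiniteMeasure γ] :
    WpE 1 γ.fst γ.snd ≤ ∫⁻ z, edist z.1 z.2 ∂γ := by
  rcases eq_or_ne γ 0 with rfl | hγ
  · simp [WpE_one_eq]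
  have h₀ : γ Set.univ ≠ 0 := Measure.measure_univ_ne_zero.2 hγ
  rw [WpE_one_eq, Measure.fst_univ]
  calc γ Set.univ * ⨅ π : {π : Measure (X × X) // IsCoupling γ.fst γ.snd π},
        ∫⁻ z, edist z.1 z.2 ∂π.1
      ≤ γ Set.univ * ∫⁻ z, edist z.1 z.2 ∂((γ Set.univ)⁻¹ • γ) :=
        mul_le_mul_right (iInf_le_of_le (ι := {π : Measure (X × X) // IsCoupling γ.fst γ.snd π})
          ⟨_, isCoupling_fst_snd γ hγ⟩ le_rfl) _
    _ = ∫⁻ z, edist z.1 z.2 ∂γ := by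
        rw [lintegral_smul_measure, smul_eq_mul, ← mul_assoc,
          ENNReal.mul_inv_cancel h₀ (measure_ne_top _ _), one_mul]

lemma memMp_one_of_lintegral_edist_ne_top {ρ : Measure X} [IsFiniteMeasure ρ] (x₀ : X)
    (h : ∫⁻ x, edist x x₀ ∂ρ ≠ ∞) : MemMp 1 ρ := by
  refine ⟨inferInstance, fun y => ?_⟩
  have hle : ∫⁻ x, edist x y ∂ρ ≤ ∫⁻ x, edist x x₀ ∂ρ + edist x₀ y * ρ Set.univ := by
    rw [← lintegral_const, ← lintegral_add_right _ measurable_const]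
    exact lintegral_mono fun x => edist_triangle x x₀ y
  simp only [ENNReal.rpow_one]
  exact ne_top_of_le_ne_top (by finiteness) hle

lemma genWE_le_planObjective_of_memMp (a b : ℝ) (μ₁ μ₂ : Measure X) (γ : Measure (X × X))
    [IsFiniteMeasure γ] (h₁ : MemMp 1 γ.fst) (h₂ : MemMp 1 γ.snd) :
    genWE a b 1 μ₁ μ₂ ≤ planObjective a b μ₁ μ₂ γ := by
  have hmass : γ.fst Set.univ = γ.snd Set.univ := by rw [Measure.fst_univ, Measure.snd_univ]
  refine iInf_le_of_le γ.fst <| iInf_le_of_le γ.snd <| iInf_le_of_le h₁ <|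
    iInf_le_of_le h₂ <| iInf_le_of_le hmass ?_
  exact add_le_add le_rfl (mul_le_mul_right (WpE_one_fst_snd_le γ) _)

lemma iInf_planObjective_le_of_isCoupling (a b : ℝ) {μ₁ μ₂ μ' ν' : Measure X}
    [IsFiniteMeasure μ₁] [IsFiniteMeasure μ₂] [IsFiniteMeasure μ']
    (hmass : μ' Set.univ = ν' Set.univ) {π : Measure (X × X)} (hπ : IsCoupling μ' ν' π)
    (hcost : μ' Set.univ * ∫⁻ z, edist z.1 z.2 ∂π ≠ ∞) :
    ⨅ γ ∈ dominatedPlans μ₁ μ₂, planObjective a b μ₁ μ₂ γ ≤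
      ENNReal.ofReal a * tvE μ₁ μ' + ENNReal.ofReal a * tvE μ₂ ν' +
        ENNReal.ofReal b * (μ' Set.univ * ∫⁻ z, edist z.1 z.2 ∂π) := by
  have : IsProbabilityMeasure π := hπ.1
  have := π.smul_finite (measure_ne_top μ' Set.univ)
  obtain ⟨γ, hγ, h₁, h₂, htv⟩ := exists_le_tvE_fst_add_tvE_snd_le (μ' Set.univ • π) μ₁ μ₂
  rw [hπ.smul_fst, hmass, hπ.smul_snd] at htv
  have hγcost : ∫⁻ z, edist z.1 z.2 ∂γ ≤ μ' Set.univ * ∫⁻ z, edist z.1 z.2 ∂π :=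
    (lintegral_mono' hγ le_rfl).trans_eq (lintegral_smul_measure _ _)
  refine iInf₂_le_of_le γ ⟨isFiniteMeasure_of_le _ hγ, ne_top_of_le_ne_top hcost hγcost, h₁, h₂⟩ ?_
  calc planObjective a b μ₁ μ₂ γ
      = ENNReal.ofReal a * (tvE μ₁ γ.fst + tvE μ₂ γ.snd) +
          ENNReal.ofReal b * ∫⁻ z, edist z.1 z.2 ∂γ := by rw [planObjective, mul_add]
    _ ≤ ENNReal.ofReal a * (tvE μ₁ μ' + tvE μ₂ ν') +
          ENNReal.ofReal b * (μ' Set.univ * ∫⁻ z, edist z.1 z.2 ∂π) := by gcongr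
    _ = _ := by rw [mul_add]

lemma iInf_planObjective_le_genWE (a : ℝ) {b : ℝ} (hb : 0 < b) (μ₁ μ₂ : Measure X)
    [IsFiniteMeasure μ₁] [IsFiniteMeasure μ₂] :
    ⨅ γ ∈ dominatedPlans μ₁ μ₂, planObjective a b μ₁ μ₂ γ ≤ genWE a b 1 μ₁ μ₂ := by
  refine le_iInf fun μ' => le_iInf fun ν' => le_iInf fun hμ' => le_iInf fun hν' =>
    le_iInf fun hmass => ?_
  have := hμ'.1
  have := hν'.1
  rcases eq_or_ne (μ' Set.univ) 0 with hm | hm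
  · obtain rfl : μ' = 0 := Measure.measure_univ_eq_zero.1 hm
    obtain rfl : ν' = 0 := Measure.measure_univ_eq_zero.1 (hmass ▸ hm)
    refine iInf₂_le_of_le 0 (zero_mem_dominatedPlans μ₁ μ₂) ?_
    simp [planObjective]
  rw [WpE_one_eq, ENNReal.mul_iInf_of_ne hm (measure_ne_top _ _),
    ENNReal.mul_iInf_of_ne (ENNReal.ofReal_pos.2 hb).ne' ENNReal.ofReal_ne_top, ENNReal.add_iInf]
  refine le_iInf fun π => ?_
  by_cases hcost : μ' Set.univ * ∫⁻ z, edist z.1 z.2 ∂π.1 = ∞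
  · simp [hcost, ENNReal.mul_top (ENNReal.ofReal_pos.2 hb).ne']
  exact iInf_planObjective_le_of_isCoupling a b hmass π.2 hcost

lemma planObjective_ne_top (a b : ℝ) {μ₁ μ₂ : Measure X} [IsFiniteMeasure μ₁]
    [IsFiniteMeasure μ₂] {γ : Measure (X × X)} (hγ : γ ∈ dominatedPlans μ₁ μ₂) :
    planObjective a b μ₁ μ₂ γ ≠ ∞ := by
  have := hγ.1
  simp [planObjective, ENNReal.mul_ne_top, tvE_ne_top, hγ.2.1]

lemma toReal_planObjective {a b : ℝ} (ha : 0 ≤ a) (hb : 0 ≤ b) {μ₁ μ₂ : Measure X}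
    [IsFiniteMeasure μ₁] [IsFiniteMeasure μ₂] {γ : Measure (X × X)}
    (hγ : γ ∈ dominatedPlans μ₁ μ₂) :
    (planObjective a b μ₁ μ₂ γ).toReal =
      a * tv μ₁ γ.fst + a * tv μ₂ γ.snd + b * (∫⁻ z, edist z.1 z.2 ∂γ).toReal := by
  have := hγ.1
  simp [planObjective, tv, ENNReal.toReal_add, ENNReal.mul_ne_top, tvE_ne_top, hγ.2.1,
    ENNReal.toReal_ofReal ha, ENNReal.toReal_ofReal hb]

variable [BorelSpace X]

lemma memMp_one_fst_snd_restrict (γ : Measure (X × X)) [IsFiniteMeasure γ]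
    (hγ : ∫⁻ z, edist z.1 z.2 ∂γ ≠ ∞) (x₀ : X) (r : ℝ≥0∞) (hr : r ≠ ∞) :
    MemMp 1 (γ.restrict {z | edist z.1 x₀ ≤ r}).fst ∧
      MemMp 1 (γ.restrict {z | edist z.1 x₀ ≤ r}).snd := by
  set E := {z : X × X | edist z.1 x₀ ≤ r}
  have hE : MeasurableSet E := measurableSet_le (measurable_edist_left.comp measurable_fst)
    measurable_const
  have hfst : ∫⁻ z in E, edist z.1 x₀ ∂γ ≤ r * γ E :=
    (setLIntegral_mono' hE fun z hz => hz).trans_eq (setLIntegral_const _ _)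
  have hsnd : ∫⁻ z in E, edist z.2 x₀ ∂γ ≤ ∫⁻ z, edist z.1 z.2 ∂γ + r * γ E := calc
    ∫⁻ z in E, edist z.2 x₀ ∂γ ≤ ∫⁻ z in E, (edist z.1 z.2 + r) ∂γ :=
        setLIntegral_mono' hE fun z hz => (edist_triangle_left _ _ _).trans (add_le_add le_rfl hz)
    _ = ∫⁻ z in E, edist z.1 z.2 ∂γ + r * γ E := by
        rw [lintegral_add_right _ measurable_const, setLIntegral_const]
    _ ≤ ∫⁻ z, edist z.1 z.2 ∂γ + r * γ E := add_le_add (setLIntegral_le_lintegral _ _) le_rfl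
  exact ⟨memMp_one_of_lintegral_edist_ne_top x₀ <| ne_top_of_le_ne_top (by finiteness) <|
      (lintegral_map_le _ _).trans hfst,
    memMp_one_of_lintegral_edist_ne_top x₀ <| ne_top_of_le_ne_top (by finiteness) <|
      (lintegral_map_le _ _).trans hsnd⟩

lemma genWE_le_planObjective (a b : ℝ) {μ₁ μ₂ : Measure X} [IsFiniteMeasure μ₁]
    [IsFiniteMeasure μ₂] {γ : Measure (X × X)} (hγ : γ ∈ dominatedPlans μ₁ μ₂) :
    genWE a b 1 μ₁ μ₂ ≤ planObjective a b μ₁ μ₂ γ := by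
  obtain ⟨_, hcost, h₁, h₂⟩ := hγ
  rcases isEmpty_or_nonempty X with hX | ⟨⟨x₀⟩⟩
  · exact genWE_le_planObjective_of_memMp a b μ₁ μ₂ γ ⟨inferInstance, isEmptyElim⟩
      ⟨inferInstance, isEmptyElim⟩
  set E : ℕ → Set (X × X) := fun n => {z | edist z.1 x₀ ≤ n}
  have hbound : ∀ n, genWE a b 1 μ₁ μ₂ ≤ ENNReal.ofReal a * (μ₁ Set.univ - γ (E n)) +
      ENNReal.ofReal a * (μ₂ Set.univ - γ (E n)) + ENNReal.ofReal b * ∫⁻ z, edist z.1 z.2 ∂γ := by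
    intro n
    obtain ⟨hfst, hsnd⟩ := memMp_one_fst_snd_restrict γ hcost x₀ n (ENNReal.natCast_ne_top n)
    refine (genWE_le_planObjective_of_memMp a b μ₁ μ₂ _ hfst hsnd).trans ?_
    rw [planObjective, tvE_of_le ((Measure.fst_mono Measure.restrict_le_self).trans h₁),
      tvE_of_le ((Measure.snd_mono Measure.restrict_le_self).trans h₂), Measure.fst_univ,
      Measure.snd_univ, Measure.restrict_apply_univ]
    gcongr
    exact Measure.restrict_le_self
  have hE : Filter.Tendsto (fun n => γ (E n)) Filter.atTop (nhds (γ Set.univ)) := by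
    have hunion : ⋃ n, E n = Set.univ := Set.eq_univ_of_forall fun z =>
      Set.mem_iUnion.2 ((ENNReal.exists_nat_gt (edist_ne_top z.1 x₀)).imp fun _ => le_of_lt)
    rw [← hunion]
    refine tendsto_measure_iUnion_atTop fun m n hmn z hz => ?_
    exact le_trans (show edist z.1 x₀ ≤ m from hz) (Nat.cast_le.2 hmn)
  have hsub : ∀ μ : Measure X, [IsFiniteMeasure μ] → Filter.Tendsto
      (fun n => ENNReal.ofReal a * (μ Set.univ - γ (E n))) Filter.atTop
      (nhds (ENNReal.ofReal a * (μ Set.univ - γ Set.univ))) := fun μ _ =>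
    ENNReal.Tendsto.const_mul (ENNReal.Tendsto.sub tendsto_const_nhds hE
      (Or.inl (measure_ne_top μ _))) (Or.inr ENNReal.ofReal_ne_top)
  rw [planObjective, tvE_of_le h₁, tvE_of_le h₂, Measure.fst_univ, Measure.snd_univ]
  exact ge_of_tendsto' (((hsub μ₁).add (hsub μ₂)).add tendsto_const_nhds) hbound

lemma genWE_eq_iInf_planObjective (a : ℝ) {b : ℝ} (hb : 0 < b) (μ₁ μ₂ : Measure X)
    [IsFiniteMeasure μ₁] [IsFiniteMeasure μ₂] :
    genWE a b 1 μ₁ μ₂ = ⨅ γ ∈ dominatedPlans μ₁ μ₂, planObjective a b μ₁ μ₂ γ :=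
  le_antisymm (le_iInf₂ fun _ hγ => genWE_le_planObjective a b hγ)
    (iInf_planObjective_le_genWE a hb μ₁ μ₂)

end

theorem genW_eq_sInf_dominated_plans_general
    {X : Type*} [MeasurableSpace X] [MetricSpace X] [BorelSpace X]
    (a b : ℝ) (ha : 0 < a) (hb : 0 < b)
    (μ₁ μ₂ : Measure X) [IsFiniteMeasure μ₁] [IsFiniteMeasure μ₂] :
    genW a b 1 μ₁ μ₂ =
      sInf {r : ℝ | ∃ γ : Measure (X × X), IsFiniteMeasure γ ∧
        (∫⁻ z, edist z.1 z.2 ∂γ) ≠ ∞ ∧ γ.fst ≤ μ₁ ∧ γ.snd ≤ μ₂ ∧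
        r = a * tv μ₁ γ.fst + a * tv μ₂ γ.snd +
          b * (∫⁻ z, edist z.1 z.2 ∂γ).toReal} := by
  rw [genW, genWE_eq_iInf_planObjective a hb μ₁ μ₂, iInf_subtype',
    ENNReal.toReal_iInf fun γ => planObjective_ne_top a b γ.2]
  refine congrArg sInf (Set.ext fun r => ⟨?_, ?_⟩)
  · rintro ⟨⟨γ, hγ⟩, rfl⟩
    exact ⟨γ, hγ.1, hγ.2.1, hγ.2.2.1, hγ.2.2.2, toReal_planObjective ha.le hb.le hγ⟩
  · rintro ⟨γ, h₀, hcost, h₁, h₂, rfl⟩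
    exact ⟨⟨γ, h₀, hcost, h₁, h₂⟩, toReal_planObjective ha.le hb.le ⟨h₀, hcost, h₁, h₂⟩⟩

/-- **Formulation of `W₁^{a,b}` via dominated plans** (Remark 5.4).
`W₁^{a,b}(μ₁,μ₂) = inf_{γ ∈ M^≤(μ₁,μ₂)} { a|μ₁-γ₁| + a|μ₂-γ₂| + b ∫ d dγ }`, where the
infimum runs over finite nonnegative Borel measures `γ` on `X × X` with `∫ d dγ < ∞`
whose marginals satisfy `γ₁ ≤ μ₁` and `γ₂ ≤ μ₂`. -/
theorem genW_eq_sInf_dominated_plans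
    {X : Type*} [MeasurableSpace X] [MetricSpace X] [BorelSpace X]
    [TopologicalSpace.SeparableSpace X] [CompleteSpace X]
    (a b : ℝ) (ha : 0 < a) (hb : 0 < b)
    (μ₁ μ₂ : Measure X) [IsFiniteMeasure μ₁] [IsFiniteMeasure μ₂] :
    genW a b 1 μ₁ μ₂ =
      sInf {r : ℝ | ∃ γ : Measure (X × X), IsFiniteMeasure γ ∧
        (∫⁻ z, edist z.1 z.2 ∂γ) ≠ ∞ ∧ γ.fst ≤ μ₁ ∧ γ.snd ≤ μ₂ ∧
        r = a * tv μ₁ γ.fst + a * tv μ₂ γ.snd +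
          b * (∫⁻ z, edist z.1 z.2 ∂γ).toReal} :=
  genW_eq_sInf_dominated_plans_general a b ha hb μ₁ μ₂
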